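/- arXiv:2507.21780 — 4 statements merged into one kernel-verified Lean document; each statement's English description precedes it below -/
import Mathlib

section
/- Let μ be a Borel measure on ℂ and R > 0 such that μ(D(0, R/4)) < ∞. Define δ(z) = (R - |z|)/4 for z ∈ D(0,R). Then there exists a ∈ D(0,R) such that, with r = δ(a): (i) μ(D(a, 2r)) ≤ 200 · μ(D(a, r)), and (ii) μ(D(a, r)) ≥ (1/2) · μ(D(0, R/4)). -/
open MeasureTheory Metric Filter
open scoped ENNReal

private lemma rickman_cover (μ : Measure ℂ) (R : ℝ) (a : ℂ) (ha : a ∈ ball (0:ℂ) R) :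
    μ (ball a (2 * ((R - ‖a‖) / 4))) ≤
      100 * ⨆ z ∈ ball (0:ℂ) R, μ (ball z ((R - ‖z‖) / 4)) := by
  set S := ⨆ z ∈ ball (0:ℂ) R, μ (ball z ((R - ‖z‖) / 4)) with hSdef
  have haR : ‖a‖ < R := by simpa using ha
  set δ : ℝ := (R - ‖a‖) / 4 with hδdef
  have hδ : 0 < δ := by rw [hδdef]; linarith
  set s : ℝ := δ / 2 with hsdef
  have hs : 0 < s := by positivity
  set c : ℤ × ℤ → ℂ := fun p => a + (s : ℂ) * (p.1 + p.2 * Complex.I) with hc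
  set G : Finset (ℤ × ℤ) := Finset.Icc (-4) 4 ×ˢ Finset.Icc (-4) 4 with hG
  have hcard : G.card = 81 := by decide
  have hcover : ball a (2 * δ) ⊆ ⋃ p ∈ G, ball (c p) ((R - ‖c p‖) / 4) := by
    intro w hw
    rw [mem_ball, dist_eq_norm] at hw
    set x := (w - a).re with hx0
    set y := (w - a).im with hy0
    set j := round (x / s) with hj0
    set k := round (y / s) with hk0
    have hxb : |x| < 2 * δ := by
      calc |x| ≤ ‖w - a‖ := Complex.abs_re_le_norm _
        _ = ‖w - a‖ := rfl
        _ < 2 * δ := hw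
    have hyb : |y| < 2 * δ := by
      calc |y| ≤ ‖w - a‖ := Complex.abs_im_le_norm _
        _ = ‖w - a‖ := rfl
        _ < 2 * δ := hw
    have hxj : |x - s * j| ≤ s / 2 := by
      have h1 := abs_sub_round (x / s)
      have h2 : x - s * j = s * (x / s - j) := by field_simp
      rw [h2, abs_mul, abs_of_pos hs]
      nlinarith
    have hyk : |y - s * k| ≤ s / 2 := by
      have h1 := abs_sub_round (y / s)
      have h2 : y - s * k = s * (y / s - k) := by field_simp
      rw [h2, abs_mul, abs_of_pos hs]
      nlinarith
    have hjb : |j| ≤ 4 := by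
      have h1 : |(j : ℝ)| < 9 / 2 := by
        have h2 := abs_sub_round (x / s)
        have h3 : |x / s| < 4 := by
          rw [abs_div, abs_of_pos hs]
          rw [div_lt_iff₀ hs]
          rw [hsdef]; linarith
        calc |(j : ℝ)| ≤ |(j : ℝ) - x / s| + |x / s| := by
              have := abs_add_le ((j : ℝ) - x / s) (x / s); simpa using this
          _ < 9 / 2 := by rw [abs_sub_comm]; linarith
      have h4 : ((|j| : ℤ) : ℝ) < 5 := by rw [Int.cast_abs]; linarith
      have h5 : (|j| : ℤ) < 5 := by exact_mod_cast h4
      omega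
    have hkb : |k| ≤ 4 := by
      have h1 : |(k : ℝ)| < 9 / 2 := by
        have h2 := abs_sub_round (y / s)
        have h3 : |y / s| < 4 := by
          rw [abs_div, abs_of_pos hs]
          rw [div_lt_iff₀ hs]
          rw [hsdef]; linarith
        calc |(k : ℝ)| ≤ |(k : ℝ) - y / s| + |y / s| := by
              have := abs_add_le ((k : ℝ) - y / s) (y / s); simpa using this
          _ < 9 / 2 := by rw [abs_sub_comm]; linarith
      have h4 : ((|k| : ℤ) : ℝ) < 5 := by rw [Int.cast_abs]; linarith
      have h5 : (|k| : ℤ) < 5 := by exact_mod_cast h4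
      omega
    have hpG : (j, k) ∈ G := by
      rw [hG, Finset.mem_product, Finset.mem_Icc, Finset.mem_Icc]
      rw [abs_le] at hjb hkb
      exact ⟨⟨hjb.1, hjb.2⟩, hkb.1, hkb.2⟩
    have hre : (w - c (j, k)).re = x - s * j := by
      simp [hc, Complex.sub_re, Complex.add_re, Complex.mul_re, Complex.add_im,
        Complex.mul_im, Complex.I_re, Complex.I_im, hx0]
      ring
    have him : (w - c (j, k)).im = y - s * k := by
      simp [hc, Complex.sub_im, Complex.add_im, Complex.mul_im, Complex.add_re,
        Complex.mul_re, Complex.I_re, Complex.I_im, hy0]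
      ring
    have hnsq : ‖w - c (j, k)‖ ^ 2 = (x - s * j) ^ 2 + (y - s * k) ^ 2 := by
      rw [Complex.sq_norm, Complex.normSq_apply, hre, him]
      ring
    have hvn : ‖w - c (j, k)‖ ≤ (9 / 25) * δ := by
      nlinarith [norm_nonneg (w - c (j, k)), hxj, hyk, abs_nonneg (x - s * j),
        abs_nonneg (y - s * k), sq_abs (x - s * j), sq_abs (y - s * k), hδ, hs]
    have hcpn : ‖c (j, k)‖ ≤ ‖a‖ + ‖w - a‖ + ‖w - c (j, k)‖ := by
      have h1 : c (j, k) = a + (w - a) - (w - c (j, k)) := by ring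
      calc ‖c (j, k)‖ = ‖a + (w - a) - (w - c (j, k))‖ := by rw [← h1]
        _ ≤ ‖a + (w - a)‖ + ‖w - c (j, k)‖ := norm_sub_le _ _
        _ ≤ ‖a‖ + ‖w - a‖ + ‖w - c (j, k)‖ := by
            have := norm_add_le a (w - a); linarith
    have hmem : w ∈ ball (c (j, k)) ((R - ‖c (j, k)‖) / 4) := by
      rw [mem_ball, dist_eq_norm]
      have hRa : R - ‖a‖ = 4 * δ := by rw [hδdef]; ring
      linarith
    exact Set.mem_biUnion hpG hmem
  have hterm : ∀ p ∈ G, μ (ball (c p) ((R - ‖c p‖) / 4)) ≤ S := by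
    intro p _
    by_cases hp : c p ∈ ball (0 : ℂ) R
    · exact le_iSup₂_of_le (c p) hp le_rfl
    · have hp' : R ≤ ‖c p‖ := by
        rw [mem_ball, dist_zero_right] at hp; linarith [not_lt.mp hp]
      have : (R - ‖c p‖) / 4 ≤ 0 := by linarith
      rw [ball_eq_empty.2 this]
      simp
  calc μ (ball a (2 * δ)) ≤ μ (⋃ p ∈ G, ball (c p) ((R - ‖c p‖) / 4)) :=
        measure_mono hcover
    _ ≤ ∑ p ∈ G, μ (ball (c p) ((R - ‖c p‖) / 4)) := measure_biUnion_finset_le _ _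
    _ ≤ ∑ _p ∈ G, S := Finset.sum_le_sum hterm
    _ = 81 * S := by rw [Finset.sum_const, hcard]; simp [mul_comm]
    _ ≤ 100 * S := mul_le_mul_left (by norm_num) S

/-- Key step in the proof of Rickman's lemma: for a Borel measure `μ` on `ℂ`,
finite on compact sets, with `μ(D(0, R/4)) < ∞`, there is a point `a ∈ D(0,R)`
such that, with `r = δ(a) = (R - |a|)/4`, one has the doubling bound
`μ(D(a,2r)) ≤ 200 μ(D(a,r))` and `μ(D(a,r)) ≥ μ(D(0,R/4))/2`. -/
theorem rickman_key_step (μ : Measure ℂ) [IsFiniteMeasureOnCompacts μ]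
    (R : ℝ) (hR : 0 < R) (hfin : μ (ball 0 (R / 4)) ≠ ∞) :
    ∃ a ∈ ball (0 : ℂ) R,
      μ (ball a (2 * ((R - ‖a‖) / 4))) ≤ 200 * μ (ball a ((R - ‖a‖) / 4)) ∧
      μ (ball 0 (R / 4)) ≤ 2 * μ (ball a ((R - ‖a‖) / 4)) := by
  set S := ⨆ z ∈ ball (0:ℂ) R, μ (ball z ((R - ‖z‖) / 4)) with hSdef
  have h0mem : (0 : ℂ) ∈ ball (0 : ℂ) R := by simpa using hR
  have hball0 : μ (ball (0:ℂ) (R/4)) ≤ S := by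
    rw [show (R : ℝ)/4 = (R - ‖(0:ℂ)‖)/4 by simp]
    exact le_iSup₂ (f := fun z (_ : z ∈ ball (0:ℂ) R) => μ (ball z ((R - ‖z‖)/4)))
      (0 : ℂ) h0mem
  have hStop : S ≠ ⊤ := by
    have hle : S ≤ μ (closedBall (0:ℂ) R) := by
      apply iSup₂_le; intro z hz
      have hz' : ‖z‖ < R := by simpa using hz
      apply measure_mono
      intro v hv
      rw [mem_ball, dist_eq_norm] at hv
      rw [mem_closedBall, dist_zero_right]
      calc ‖v‖ ≤ ‖v - z‖ + ‖z‖ := by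
            have := norm_add_le (v - z) z; simpa using this
        _ ≤ R := by linarith
    exact ne_top_of_le_ne_top (isCompact_closedBall (0:ℂ) R).measure_lt_top.ne hle
  obtain ⟨a, ha, hma⟩ : ∃ a ∈ ball (0:ℂ) R, S ≤ 2 * μ (ball a ((R - ‖a‖)/4)) := by
    rcases eq_or_ne S 0 with h0 | h0
    · exact ⟨0, h0mem, by simp [h0]⟩
    · have hhalf : S / 2 < S := ENNReal.half_lt_self h0 hStop
      rw [hSdef] at hhalf
      simp only [lt_iSup_iff] at hhalf
      obtain ⟨a, ha, h⟩ := hhalf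
      refine ⟨a, ha, ?_⟩
      calc S = 2 * (S / 2) := (ENNReal.mul_div_cancel' (by norm_num) (by norm_num)).symm
        _ ≤ 2 * μ (ball a ((R - ‖a‖)/4)) := mul_le_mul_right h.le 2
  refine ⟨a, ha, ?_, hball0.trans hma⟩
  calc μ (ball a (2 * ((R - ‖a‖)/4))) ≤ 100 * S := rickman_cover μ R a ha
    _ ≤ 100 * (2 * μ (ball a ((R - ‖a‖)/4))) := mul_le_mul_right hma 100
    _ = 200 * μ (ball a ((R - ‖a‖)/4)) := by rw [← mul_assoc]; norm_num
end

section
/- For any a ∈ ℂ and r > 0 with the disc D(a, 2r) contained in D(0, R) and r = (R - |a|)/4, the disc D(a, 2r) can be covered by at most 100 discs of the form D(z, δ(z)) with z ∈ D(0, R), where δ(z) = (R - |z|)/4. -/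
open Metric

lemma cplx_norm_le_aux (u v t : ℝ) (ht : 0 ≤ t) (h : u^2 + v^2 ≤ t^2) :
    ‖(⟨u, v⟩ : ℂ)‖ ≤ t := by
  rw [Complex.norm_def, Complex.normSq_mk]
  calc Real.sqrt (u * u + v * v) ≤ Real.sqrt (t^2) := by
        apply Real.sqrt_le_sqrt; nlinarith
    _ = t := Real.sqrt_sq ht

lemma exists_idx_aux (s t : ℝ) (hs : 0 < s) (ht : |t| < 4 * s) :
    ∃ j : ℕ, j ≤ 8 ∧ |t - ((j : ℝ) - 4) * s| ≤ s / 2 := by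
  set n := round (t / s) with hn
  have h1 : |t / s - (n : ℝ)| ≤ 1 / 2 := abs_sub_round (t / s)
  have h2 : |t / s| < 4 := by
    rw [abs_div, abs_of_pos hs, div_lt_iff₀ hs]; linarith
  have hn45 : |(n : ℝ)| < 9 / 2 := by
    have := abs_sub_abs_le_abs_sub (n : ℝ) (t / s)
    rw [abs_sub_comm] at this
    linarith
  have hn4 : -4 ≤ n ∧ n ≤ 4 := by
    have h5 : (|n| : ℤ) < 5 := by
      have : |((n : ℤ) : ℝ)| < 5 := by push_cast; linarith
      exact_mod_cast (by rwa [← Int.cast_abs] at this : ((|n| : ℤ) : ℝ) < 5)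
    have := abs_lt.mp h5
    omega
  refine ⟨(n + 4).toNat, ?_, ?_⟩
  · omega
  · have hcast : (((n + 4).toNat : ℝ)) = (n : ℝ) + 4 := by
      have : ((n + 4).toNat : ℤ) = n + 4 := Int.toNat_of_nonneg (by omega)
      exact_mod_cast congrArg (Int.cast : ℤ → ℝ) this
    rw [hcast]
    have heq : t - ((n : ℝ) + 4 - 4) * s = (t / s - (n : ℝ)) * s := by
      field_simp
      ring
    rw [heq, abs_mul, abs_of_pos hs]
    calc |t / s - (n : ℝ)| * s ≤ (1 / 2) * s := by
          exact mul_le_mul_of_nonneg_right h1 hs.le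
      _ = s / 2 := by ring

set_option maxHeartbeats 1000000 in
/-- Geometric covering statement: for `a ∈ D(0,R)` and `r = (R - |a|)/4` with
`D(a, 2r) ⊆ D(0,R)`, the disc `D(a, 2r)` can be covered by at most `100` discs
of the form `D(z, (R - |z|)/4)` with `z ∈ D(0,R)`. -/
theorem covering_by_hundred_discs (R : ℝ) (hR : 0 < R) (a : ℂ) (ha : a ∈ ball (0 : ℂ) R)
    (r : ℝ) (hr : r = (R - ‖a‖) / 4) (hsub : ball a (2 * r) ⊆ ball (0 : ℂ) R) :
    ∃ z : Fin 100 → ℂ, (∀ i, z i ∈ ball (0 : ℂ) R) ∧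
      ball a (2 * r) ⊆ ⋃ i : Fin 100, ball (z i) ((R - ‖z i‖) / 4) := by
  have ha' : ‖a‖ < R := by simpa using mem_ball_zero_iff.mp ha
  have hrpos : 0 < r := by rw [hr]; linarith
  set s : ℝ := r / 2 with hs
  have hspos : 0 < s := by positivity
  set z : Fin 100 → ℂ := fun i =>
    ⟨a.re + (((i.val % 9 : ℕ) : ℝ) - 4) * s, a.im + (((i.val / 9 % 9 : ℕ) : ℝ) - 4) * s⟩
    with hz
  have haR : ‖a‖ = R - 4 * r := by rw [hr]; ring
  -- distance from a to any center is at most 3r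
  have hza : ∀ i : Fin 100, ‖z i - a‖ ≤ 3 * r := by
    intro i
    have hj : (i.val % 9 : ℕ) ≤ 8 := by omega
    have hk : (i.val / 9 % 9 : ℕ) ≤ 8 := by omega
    have hsub' : z i - a = ⟨(((i.val % 9 : ℕ) : ℝ) - 4) * s, (((i.val / 9 % 9 : ℕ) : ℝ) - 4) * s⟩ := by
      apply Complex.ext <;> simp [hz]
    rw [hsub']
    apply cplx_norm_le_aux _ _ _ (by positivity)
    have hj' : |((i.val % 9 : ℕ) : ℝ) - 4| ≤ 4 := by
      rw [abs_le]; constructor <;> [skip; skip] <;>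
        (have : ((i.val % 9 : ℕ) : ℝ) ≤ 8 := by exact_mod_cast hj) <;>
        (have : (0 : ℝ) ≤ ((i.val % 9 : ℕ) : ℝ) := Nat.cast_nonneg _) <;> linarith
    have hk' : |((i.val / 9 % 9 : ℕ) : ℝ) - 4| ≤ 4 := by
      rw [abs_le]; constructor <;> [skip; skip] <;>
        (have : ((i.val / 9 % 9 : ℕ) : ℝ) ≤ 8 := by exact_mod_cast hk) <;>
        (have : (0 : ℝ) ≤ ((i.val / 9 % 9 : ℕ) : ℝ) := Nat.cast_nonneg _) <;> linarith
    have h1 : (((i.val % 9 : ℕ) : ℝ) - 4)^2 ≤ 16 := by nlinarith [abs_nonneg (((i.val % 9 : ℕ) : ℝ) - 4), sq_abs (((i.val % 9 : ℕ) : ℝ) - 4)]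
    have h2 : (((i.val / 9 % 9 : ℕ) : ℝ) - 4)^2 ≤ 16 := by nlinarith [abs_nonneg (((i.val / 9 % 9 : ℕ) : ℝ) - 4), sq_abs (((i.val / 9 % 9 : ℕ) : ℝ) - 4)]
    have hs2 : s^2 = r^2 / 4 := by rw [hs]; ring
    nlinarith [sq_nonneg s, sq_nonneg r, hrpos]
  refine ⟨z, ?_, ?_⟩
  · intro i
    rw [mem_ball_zero_iff]
    calc ‖z i‖ ≤ ‖a‖ + ‖z i - a‖ := by
          have := norm_add_le a (z i - a); simpa using this
      _ ≤ (R - 4 * r) + 3 * r := by rw [haR]; linarith [hza i]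
      _ < R := by linarith
  · intro w hw
    have hwa : ‖w - a‖ < 2 * r := by
      rw [mem_ball, dist_eq_norm] at hw; exact hw
    have hx : |(w - a).re| < 4 * s := by
      have := Complex.abs_re_le_norm (w - a)
      have h4s : 4 * s = 2 * r := by rw [hs]; ring
      rw [h4s]; linarith
    have hy : |(w - a).im| < 4 * s := by
      have := Complex.abs_im_le_norm (w - a)
      have h4s : 4 * s = 2 * r := by rw [hs]; ring
      rw [h4s]; linarith
    obtain ⟨j, hj8, hjb⟩ := exists_idx_aux s (w - a).re hspos hx
    obtain ⟨k, hk8, hkb⟩ := exists_idx_aux s (w - a).im hspos hy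
    set i : Fin 100 := ⟨j + 9 * k, by omega⟩ with hi
    have hmod : (j + 9 * k) % 9 = j := by omega
    have hdiv : (j + 9 * k) / 9 % 9 = k := by omega
    have hzi : z i = ⟨a.re + ((j : ℝ) - 4) * s, a.im + ((k : ℝ) - 4) * s⟩ := by
      rw [hz]; simp only [hi]
      congr 2 <;> simp [hmod, hdiv]
    rw [Set.mem_iUnion]
    refine ⟨i, ?_⟩
    rw [mem_ball, dist_eq_norm]
    have hwz : w - z i = ⟨(w - a).re - ((j : ℝ) - 4) * s, (w - a).im - ((k : ℝ) - 4) * s⟩ := by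
      rw [hzi]; apply Complex.ext <;> simp <;> ring
    have hwzn : ‖w - z i‖ ≤ 9 / 25 * r := by
      rw [hwz]
      apply cplx_norm_le_aux _ _ _ (by positivity)
      have e1 : ((w - a).re - ((j : ℝ) - 4) * s)^2 ≤ (s / 2)^2 := by
        have := sq_abs ((w - a).re - ((j : ℝ) - 4) * s)
        nlinarith [abs_nonneg ((w - a).re - ((j : ℝ) - 4) * s), hspos]
      have e2 : ((w - a).im - ((k : ℝ) - 4) * s)^2 ≤ (s / 2)^2 := by
        have := sq_abs ((w - a).im - ((k : ℝ) - 4) * s)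
        nlinarith [abs_nonneg ((w - a).im - ((k : ℝ) - 4) * s), hspos]
      have hs2 : (s / 2)^2 = r^2 / 16 := by rw [hs]; ring
      nlinarith [sq_nonneg r]
    have hzia : ‖z i - a‖ ≤ ‖z i - w‖ + ‖w - a‖ := by
      have := norm_add_le (z i - w) (w - a); simpa using this
    have hziw : ‖z i - w‖ = ‖w - z i‖ := norm_sub_rev _ _
    have hzin : ‖z i‖ - ‖a‖ ≤ ‖z i - a‖ := norm_sub_norm_le _ _
    -- ‖z i‖ ≤ ‖a‖ + ‖z i - w‖ + ‖w - a‖ < (R - 4r) + 9/25 r + 2r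
    rw [hziw] at hzia
    rw [haR] at hzin
    linarith [hwzn, hwa, hzia, hzin]
end

section
/- Let f = (f_0 : … : f_m) : ℂ → ℙ^m(ℂ) be a holomorphic curve with image in a projective variety M, given by entire functions f_0,…,f_m without common zeros, and let u = (1/2)·log(|f_0|² + ⋯ + |f_m|²). Let P_1,…,P_q be linear forms whose associated divisors on M have the property that any n+1 of them intersect emptily, and suppose f omits all q divisors, so that u_j = log|P_j(f_0,…,f_m)| is harmonic on ℂ for each j. Then for every I ⊆ {1,…,q} with |I| = n+1, max_{j∈I} u_j = u + O(1) uniformly on ℂ. -/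
open scoped BigOperators

lemma aux_eval_smul {σ : Type*} {p : MvPolynomial σ ℂ} {d : ℕ} (hp : p.IsHomogeneous d)
    (c : ℂ) (x : σ → ℂ) :
    MvPolynomial.eval (fun i => c * x i) p = c ^ d * MvPolynomial.eval x p := by
  rw [MvPolynomial.eval_eq, MvPolynomial.eval_eq, Finset.mul_sum]
  refine Finset.sum_congr rfl fun k hk => ?_
  have hd : (∑ i ∈ k.support, k i) = d := by
    have h := hp (MvPolynomial.mem_support_iff.mp hk)
    rw [Pi.one_def, ← Finsupp.degree_eq_weight_one] at h
    exact h
  rw [← hd]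
  simp_rw [mul_pow]
  rw [Finset.prod_mul_distrib, Finset.prod_pow_eq_pow_sum]
  ring

/-- A projective variety `M ⊆ ℙ^m(ℂ)`: the common zero locus of a family of
homogeneous polynomials in `m + 1` variables. -/
def IsProjectiveVariety (m : ℕ) (M : Set (Projectivization ℂ (EuclideanSpace ℂ (Fin (m + 1))))) :
    Prop :=
  ∃ S : Set (MvPolynomial (Fin (m + 1)) ℂ),
    (∀ p ∈ S, ∃ d, p.IsHomogeneous d) ∧
    M = {x | ∀ p ∈ S, MvPolynomial.eval (fun i => x.rep i) p = 0}

/-- Let `f : ℂ → M` be a holomorphic curve given by a reduced representation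
`F = (f₀, …, f_m)` (entire, without common zeros), `u = log ‖F‖`, and let
`P₁, …, P_q` be linear forms whose divisors on `M` have the property that any
`n+1` of them have empty intersection. If `f` omits all `q` divisors, so
`u_j = log |P_j ∘ F|` is harmonic, then `max_{j ∈ I} u_j = u + O(1)` uniformly
on `ℂ`, for every `I` of cardinality `n+1`. -/
theorem max_log_forms_eq_u_add_O1 (m n q : ℕ)
    (M : Set (Projectivization ℂ (EuclideanSpace ℂ (Fin (m + 1)))))
    (hM : IsProjectiveVariety m M)
    (F : ℂ → EuclideanSpace ℂ (Fin (m + 1)))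
    (hF : Differentiable ℂ F) (hF0 : ∀ z, F z ≠ 0)
    (hFM : ∀ z, Projectivization.mk ℂ (F z) (hF0 z) ∈ M)
    (P : Fin q → (EuclideanSpace ℂ (Fin (m + 1)) →ₗ[ℂ] ℂ))
    (hint : ∀ I : Finset (Fin q), I.card = n + 1 →
      ⋂ j ∈ I, {x ∈ M | P j x.rep = 0} = ∅)
    (homit : ∀ j z, P j (F z) ≠ 0)
    (u : ℂ → ℝ) (hu : ∀ z, u z = Real.log ‖F z‖) :
    ∃ C : ℝ, 0 < C ∧ ∀ (I : Finset (Fin q)) (hI : I.card = n + 1), ∀ z : ℂ,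
      |(I.sup' (Finset.card_pos.mp (by omega)) fun j => Real.log ‖P j (F z)‖) - u z| ≤ C := by
  classical
  obtain ⟨Sp, hSh, hSM⟩ := hM
  -- membership criterion for `mk x` in `M`
  have hmem : ∀ (x : EuclideanSpace ℂ (Fin (m + 1))) (hx : x ≠ 0),
      Projectivization.mk ℂ x hx ∈ M ↔ ∀ p ∈ Sp, MvPolynomial.eval (fun i => x i) p = 0 := by
    intro x hx
    obtain ⟨a, ha⟩ := Projectivization.exists_smul_eq_mk_rep ℂ x hx
    have hrep : (fun i => (Projectivization.mk ℂ x hx).rep i) = fun i => (a : ℂ) * x i := by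
      funext i; rw [← ha]; rfl
    rw [hSM]
    simp only [Set.mem_setOf_eq]
    constructor
    · intro h p hp
      obtain ⟨d, hpd⟩ := hSh p hp
      have := h p hp
      rw [hrep, aux_eval_smul hpd] at this
      rcases mul_eq_zero.mp this with h' | h'
      · exact absurd h' (pow_ne_zero d a.ne_zero)
      · exact h'
    · intro h p hp
      obtain ⟨d, hpd⟩ := hSh p hp
      rw [hrep, aux_eval_smul hpd, h p hp, mul_zero]
  -- the linear forms vanish at `rep (mk x)` iff they vanish at `x`
  have hPrep : ∀ (j : Fin q) (x : EuclideanSpace ℂ (Fin (m + 1))) (hx : x ≠ 0),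
      P j (Projectivization.mk ℂ x hx).rep = 0 ↔ P j x = 0 := by
    intro j x hx
    obtain ⟨a, ha⟩ := Projectivization.exists_smul_eq_mk_rep ℂ x hx
    rw [← ha, Units.smul_def, map_smul, smul_eq_mul, mul_eq_zero]
    constructor
    · rintro (h | h)
      · exact absurd h a.ne_zero
      · exact h
    · exact Or.inr
  -- the compact set of unit vectors representing points of M
  set T : Set (EuclideanSpace ℂ (Fin (m + 1))) :=
    {x | ‖x‖ = 1 ∧ ∀ p ∈ Sp, MvPolynomial.eval (fun i => x i) p = 0} with hT
  have hTclosed : IsClosed T := by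
    have h1 : IsClosed {x : EuclideanSpace ℂ (Fin (m + 1)) | ‖x‖ = 1} :=
      isClosed_eq continuous_norm continuous_const
    have h2 : IsClosed {x : EuclideanSpace ℂ (Fin (m + 1)) |
        ∀ p ∈ Sp, MvPolynomial.eval (fun i => x i) p = 0} := by
      have heq : {x : EuclideanSpace ℂ (Fin (m + 1)) |
          ∀ p ∈ Sp, MvPolynomial.eval (fun i => x i) p = 0}
          = ⋂ p ∈ Sp, {x | MvPolynomial.eval (fun i => x i) p = 0} := by
        ext x; simp
      rw [heq]
      refine isClosed_biInter fun p _ => isClosed_eq ?_ continuous_const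
      have hcoord : Continuous fun x : EuclideanSpace ℂ (Fin (m + 1)) =>
          (fun i => x i : Fin (m + 1) → ℂ) :=
        PiLp.continuous_ofLp 2 (fun _ : Fin (m + 1) => ℂ)
      exact (MvPolynomial.continuous_eval p).comp hcoord
    exact h1.inter h2
  have hTsub : T ⊆ Metric.sphere (0 : EuclideanSpace ℂ (Fin (m + 1))) 1 := by
    intro x hx
    simp only [Metric.mem_sphere, dist_zero_right]
    exact hx.1
  have hTc : IsCompact T :=
    (isCompact_sphere (0 : EuclideanSpace ℂ (Fin (m + 1))) 1).of_isClosed_subset hTclosed hTsub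
  -- main per-I statement
  have main : ∀ I : Finset (Fin q), ∃ C : ℝ, 0 < C ∧ ∀ (hI : I.card = n + 1), ∀ z : ℂ,
      |(I.sup' (Finset.card_pos.mp (by omega)) fun j => Real.log ‖P j (F z)‖) - u z| ≤ C := by
    intro I
    by_cases hI : I.card = n + 1
    swap
    · exact ⟨1, one_pos, fun h => absurd h hI⟩
    have hne : I.Nonempty := Finset.card_pos.mp (by omega)
    -- positivity of the sum of norms on T
    have hpos : ∀ x ∈ T, 0 < ∑ j ∈ I, ‖P j x‖ := by
      intro x hx
      have hx0 : x ≠ 0 := by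
        intro h
        have h1 := hx.1
        rw [h, norm_zero] at h1
        exact one_ne_zero h1.symm
      have hxM : Projectivization.mk ℂ x hx0 ∈ M := (hmem x hx0).mpr hx.2
      by_contra hle
      push_neg at hle
      have hall : ∀ j ∈ I, P j x = 0 := by
        intro j hj
        have h0 : ‖P j x‖ ≤ 0 := by
          have := Finset.single_le_sum (f := fun j => ‖P j x‖)
            (fun i _ => norm_nonneg _) hj
          linarith
        simpa using le_antisymm h0 (norm_nonneg _)
      have hmemI : Projectivization.mk ℂ x hx0 ∈ ⋂ j ∈ I, {x ∈ M | P j x.rep = 0} := by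
        refine Set.mem_iInter₂.mpr fun j hj => ⟨hxM, ?_⟩
        exact (hPrep j x hx0).mpr (hall j hj)
      rw [hint I hI] at hmemI
      exact hmemI
    -- continuity of the sum of norms
    have hgc : Continuous fun x : EuclideanSpace ℂ (Fin (m + 1)) => ∑ j ∈ I, ‖P j x‖ :=
      continuous_finset_sum I fun j _ => (LinearMap.continuous_of_finiteDimensional (P j)).norm
    -- uniform lower bound on T
    obtain ⟨ε, hε0, hεle⟩ : ∃ ε : ℝ, 0 < ε ∧ ∀ x ∈ T, ε ≤ ∑ j ∈ I, ‖P j x‖ := by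
      rcases T.eq_empty_or_nonempty with hTe | hTne
      · exact ⟨1, one_pos, fun x hx => by rw [hTe] at hx; exact absurd hx (Set.notMem_empty x)⟩
      · obtain ⟨x0, hx0T, hmin⟩ := hTc.exists_isMinOn hTne hgc.continuousOn
        exact ⟨_, hpos x0 hx0T, fun x hx => hmin hx⟩
    -- the constants
    set A : ℝ := I.sup' hne fun j => Real.log (‖LinearMap.toContinuousLinearMap (P j)‖ + 1)
      with hA
    set B : ℝ := Real.log (ε / (n + 1)) with hB
    refine ⟨|A| + |B| + 1, by positivity, fun _ z => ?_⟩
    have hFzpos : (0 : ℝ) < ‖F z‖ := norm_pos_iff.mpr (hF0 z)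
    -- upper bound
    have hupper : (I.sup' hne fun j => Real.log ‖P j (F z)‖) ≤ A + u z := by
      refine Finset.sup'_le _ _ fun j hj => ?_
      have h1 : ‖P j (F z)‖ ≤ (‖LinearMap.toContinuousLinearMap (P j)‖ + 1) * ‖F z‖ := by
        have h := (LinearMap.toContinuousLinearMap (P j)).le_opNorm (F z)
        rw [LinearMap.coe_toContinuousLinearMap'] at h
        nlinarith [norm_nonneg (LinearMap.toContinuousLinearMap (P j))]
      have h2 : Real.log ‖P j (F z)‖ ≤
          Real.log ((‖LinearMap.toContinuousLinearMap (P j)‖ + 1) * ‖F z‖) :=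
        Real.log_le_log (norm_pos_iff.mpr (homit j z)) h1
      rw [Real.log_mul (by positivity) hFzpos.ne'] at h2
      have h3 : Real.log (‖LinearMap.toContinuousLinearMap (P j)‖ + 1) ≤ A :=
        Finset.le_sup' (fun j => Real.log (‖LinearMap.toContinuousLinearMap (P j)‖ + 1)) hj
      rw [hu z]
      linarith
    -- lower bound
    have hlower : B + u z ≤ I.sup' hne fun j => Real.log ‖P j (F z)‖ := by
      set y : EuclideanSpace ℂ (Fin (m + 1)) := ((‖F z‖ : ℂ))⁻¹ • F z with hy
      have hcne : ((‖F z‖ : ℂ)) ≠ 0 := by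
        simpa using hFzpos.ne'
      have hy1 : ‖y‖ = 1 := by
        rw [hy, norm_smul, norm_inv]
        have : ‖((‖F z‖ : ℝ) : ℂ)‖ = ‖F z‖ := by
          simp [abs_of_pos hFzpos]
        rw [this, inv_mul_cancel₀ hFzpos.ne']
      have hy0 : y ≠ 0 := by
        intro h; rw [h, norm_zero] at hy1; exact one_ne_zero hy1.symm
      have hymk : Projectivization.mk ℂ y hy0 = Projectivization.mk ℂ (F z) (hF0 z) := by
        rw [Projectivization.mk_eq_mk_iff]
        exact ⟨Units.mk0 _ (inv_ne_zero hcne), rfl⟩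
      have hyT : y ∈ T := by
        refine ⟨hy1, ?_⟩
        have := hFM z
        rw [← hymk] at this
        exact (hmem y hy0).mp this
      have hsum : ε ≤ ∑ j ∈ I, ‖P j y‖ := hεle y hyT
      have hPy : ∀ j, ‖P j y‖ = ‖F z‖⁻¹ * ‖P j (F z)‖ := by
        intro j
        rw [hy, map_smul, smul_eq_mul, norm_mul, norm_inv]
        congr 1
        congr 1
        simp [abs_of_pos hFzpos]
      have hsum2 : ε * ‖F z‖ ≤ ∑ j ∈ I, ‖P j (F z)‖ := by
        have : ∑ j ∈ I, ‖P j y‖ = ‖F z‖⁻¹ * ∑ j ∈ I, ‖P j (F z)‖ := by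
          rw [Finset.mul_sum]; exact Finset.sum_congr rfl fun j _ => hPy j
        rw [this] at hsum
        rw [← le_div_iff₀ hFzpos] at *
        calc ε ≤ ‖F z‖⁻¹ * ∑ j ∈ I, ‖P j (F z)‖ := hsum
          _ = (∑ j ∈ I, ‖P j (F z)‖) / ‖F z‖ := by rw [inv_mul_eq_div]
      obtain ⟨j, hjI, hjmax⟩ := Finset.exists_mem_eq_sup' hne fun j => ‖P j (F z)‖
      have hcard : ∑ j' ∈ I, ‖P j' (F z)‖ ≤ (n + 1 : ℝ) * ‖P j (F z)‖ := by
        have h1 : ∀ j' ∈ I, ‖P j' (F z)‖ ≤ ‖P j (F z)‖ := by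
          intro j' hj'
          rw [← hjmax]
          exact Finset.le_sup' (fun j => ‖P j (F z)‖) hj'
        calc ∑ j' ∈ I, ‖P j' (F z)‖ ≤ ∑ _j' ∈ I, ‖P j (F z)‖ := Finset.sum_le_sum h1
          _ = (I.card : ℝ) * ‖P j (F z)‖ := by rw [Finset.sum_const, nsmul_eq_mul]
          _ = (n + 1 : ℝ) * ‖P j (F z)‖ := by rw [hI]; push_cast; ring
      have hjlow : ε / (n + 1) * ‖F z‖ ≤ ‖P j (F z)‖ := by
        have hn1 : (0 : ℝ) < (n + 1 : ℝ) := by positivity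
        rw [div_mul_eq_mul_div, div_le_iff₀ hn1]
        nlinarith
      have hlog : Real.log (ε / (n + 1) * ‖F z‖) ≤ Real.log ‖P j (F z)‖ :=
        Real.log_le_log (by positivity) hjlow
      rw [Real.log_mul (by positivity) hFzpos.ne'] at hlog
      rw [hu z]
      calc B + Real.log ‖F z‖ ≤ Real.log ‖P j (F z)‖ := by rw [hB]; linarith
        _ ≤ I.sup' hne fun j => Real.log ‖P j (F z)‖ :=
            Finset.le_sup' (fun j => Real.log ‖P j (F z)‖) hjI
    show |(I.sup' hne fun j => Real.log ‖P j (F z)‖) - u z| ≤ |A| + |B| + 1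
    rw [abs_le]
    constructor
    · have h1 := neg_abs_le B
      have h2 := abs_nonneg A
      linarith
    · have h1 : A ≤ |A| := le_abs_self A
      have h2 := abs_nonneg B
      linarith
  choose c hc1 hc2 using main
  refine ⟨∑ I : Finset (Fin q), c I, ?_, fun I hI z => ?_⟩
  · exact Finset.sum_pos (fun i _ => hc1 i) ⟨∅, Finset.mem_univ _⟩
  · exact le_trans (hc2 I hI z)
      (Finset.single_le_sum (fun i _ => (hc1 i).le) (Finset.mem_univ I))
end

section
/- Every holomorphic function f : ℂ → ℂ omitting the values 0 and 1 is constant (Picard's theorem), derived as the case n = 1, M = ℙ¹(ℂ) with the three divisors {0}, {1}, {∞}: any 2 of these 3 points have empty intersection. -/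
noncomputable section PicardAux

open Complex Metric Set Nat


lemma picard_exists_primitive (h : ℂ → ℂ) (hh : Differentiable ℂ h) :
    ∃ F : ℂ → ℂ, ∀ z, HasDerivAt F (h z) z := by
  set a : ℕ → ℂ := fun n => (n ! : ℂ)⁻¹ * iteratedDeriv n h 0 with ha
  have taylor : ∀ z : ℂ, HasSum (fun n => a n * z ^ n) (h z) := by
    intro z
    have := hasSum_taylorSeries_of_entire hh 0 z
    simpa [smul_eq_mul, mul_comm, mul_assoc, mul_left_comm] using this
  have summ : ∀ r : ℝ, 0 ≤ r → Summable (fun n => ‖a n‖ * r ^ n) := by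
    intro r hr
    have : Summable (fun n => a n * (r : ℂ) ^ n) := (taylor r).summable
    have := (summable_norm_iff.2 this)
    simpa [norm_mul, norm_pow, Complex.norm_real, _root_.abs_of_nonneg hr] using this
  refine ⟨fun y => ∑' n, a n / (n + 1) * y ^ (n + 1), fun z => ?_⟩
  have key := hasDerivAt_tsum_of_isPreconnected
    (u := fun n => ‖a n‖ * (‖z‖ + 1) ^ n)
    (g := fun n y => a n / (n + 1) * y ^ (n + 1))
    (g' := fun n y => a n * y ^ n) (y₀ := 0) (y := z)
    (summ _ (by positivity)) (isOpen_ball (x := (0:ℂ)) (ε := ‖z‖ + 1))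
    ((convex_ball _ _).isPreconnected) ?_ ?_ ?_ ?_ ?_
  · have : ∑' n, a n * z ^ n = h z := (taylor z).tsum_eq
    rwa [this] at key
  · intro n y _
    have := (hasDerivAt_pow (n + 1) y).const_mul (a n / (n + 1))
    refine this.congr_deriv ?_
    have hn : ((n : ℂ) + 1) ≠ 0 := Nat.cast_add_one_ne_zero n
    push_cast
    field_simp
  · intro n y hy
    have hy' : ‖y‖ ≤ ‖z‖ + 1 := le_of_lt (by simpa [_root_.dist_zero_right] using hy)
    calc ‖a n * y ^ n‖ = ‖a n‖ * ‖y‖ ^ n := by rw [norm_mul, norm_pow]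
      _ ≤ ‖a n‖ * (‖z‖ + 1) ^ n := by
          gcongr
  · exact mem_ball_self (by positivity)
  · apply summable_of_ne_finset_zero (s := ∅)
    intro n _
    simp
  · simp only [mem_ball, _root_.dist_zero_right]
    linarith [norm_nonneg z]



lemma picard_exists_log (g : ℂ → ℂ) (hg : Differentiable ℂ g) (h0 : ∀ z, g z ≠ 0) :
    ∃ L : ℂ → ℂ, Differentiable ℂ L ∧ ∀ z, exp (L z) = g z := by
  have hd : Differentiable ℂ (deriv g) := by
    have h1 : Differentiable ℂ (fderiv ℂ g) :=
      fun z => ((hg.analyticAt z).fderiv).differentiableAt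
    have h2 : Differentiable ℂ (fun z => (fderiv ℂ g z) 1) :=
      (ContinuousLinearMap.apply ℂ ℂ (1 : ℂ)).differentiable.comp h1
    have : (deriv g) = fun z => (fderiv ℂ g z) 1 := by
      funext z; rw [fderiv_apply_one_eq_deriv]
    rwa [this]
  obtain ⟨F, hF⟩ := picard_exists_primitive (fun z => deriv g z / g z)
    (hd.div hg h0)
  set L : ℂ → ℂ := fun z => F z - F 0 + Complex.log (g 0) with hL
  have hLd : ∀ z, HasDerivAt L (deriv g z / g z) z := by
    intro z
    simpa [hL] using ((hF z).sub_const (F 0)).add_const (Complex.log (g 0))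
  have hLdiff : Differentiable ℂ L := fun z => (hLd z).differentiableAt
  set r : ℂ → ℂ := fun z => g z * exp (-L z) with hr
  have hrd : ∀ z, HasDerivAt r 0 z := by
    intro z
    have h1 : HasDerivAt g (deriv g z) z := (hg z).hasDerivAt
    have h2 : HasDerivAt (fun w => exp (-L w)) (exp (-L z) * -(deriv g z / g z)) z :=
      ((hLd z).neg).cexp
    have := h1.mul h2
    refine this.congr_deriv ?_
    field_simp [h0 z]
    ring
  have hconst : ∀ z, r z = r 0 := by
    intro z
    exact is_const_of_deriv_eq_zero (fun w => (hrd w).differentiableAt)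
      (fun w => (hrd w).deriv) z 0
  have hr0 : r 0 = 1 := by
    simp only [hr, hL]
    rw [sub_self, zero_add, Complex.exp_neg, Complex.exp_log (h0 0)]
    exact div_self (h0 0)
  refine ⟨L, hLdiff, fun z => ?_⟩
  have := hconst z
  rw [hr0] at this
  have hexp := Complex.exp_ne_zero (L z)
  have : g z * exp (-L z) = 1 := this
  rw [Complex.exp_neg] at this
  field_simp at this
  exact this.symm

end PicardAux

noncomputable section PicardAux2

open Complex Metric Set


lemma picard_deriv_diff {f : ℂ → ℂ} (hf : Differentiable ℂ f) :
    Differentiable ℂ (deriv f) := by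
  have h1 : Differentiable ℂ (fderiv ℂ f) :=
    fun z => ((hf.analyticAt z).fderiv).differentiableAt
  have h2 : Differentiable ℂ (fun z => (fderiv ℂ f z) 1) :=
    (ContinuousLinearMap.apply ℂ ℂ (1 : ℂ)).differentiable.comp h1
  have : (deriv f) = fun z => (fderiv ℂ f z) 1 := by
    funext z; rw [fderiv_apply_one_eq_deriv]
  rwa [this]

lemma picard_bloch (f : ℂ → ℂ) (hf : Differentiable ℂ f) (hd0 : deriv f 0 ≠ 0)
    (R : ℝ) (hR : 0 < R) :
    ∃ w : ℂ, ball w (R * ‖deriv f 0‖ / 64) ⊆ Set.range f := by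
  have hdc : Continuous (deriv f) := (picard_deriv_diff hf).continuous
  set ph : ℂ → ℝ := fun z => (R - ‖z‖) * ‖deriv f z‖ with hph
  obtain ⟨p, hpmem, hpmax⟩ := (isCompact_closedBall (0:ℂ) R).exists_isMaxOn
    ⟨0, mem_closedBall_self hR.le⟩
    (((continuous_const.sub continuous_norm).mul hdc.norm).continuousOn)
  have hp0 : R * ‖deriv f 0‖ ≤ ph p := by
    have := hpmax (mem_closedBall_self hR.le)
    simpa [ph] using this
  have hphi_pos : 0 < ph p := lt_of_lt_of_le (mul_pos hR (norm_pos_iff.2 hd0)) hp0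
  set M := ‖deriv f p‖ with hM
  have hMpos : 0 < M ∧ ‖p‖ < R := by
    rcases mul_pos_iff.1 hphi_pos with ⟨h1, h2⟩ | ⟨h1, h2⟩
    · exact ⟨h2, sub_pos.mp h1⟩
    · exact absurd h2 (not_lt.2 (norm_nonneg _))
  obtain ⟨hMpos, hpR⟩ := hMpos
  set t := (R - ‖p‖) / 2 with ht
  have htpos : 0 < t := by rw [ht]; linarith
  -- step 1 : derivative bound on ball p t
  have step1 : ∀ zz ∈ ball p t, ‖deriv f zz‖ ≤ 2 * M := by
    intro zz hzz
    have hzzp : ‖zz - p‖ < t := by simpa [dist_eq_norm] using hzz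
    have hzzR : ‖zz‖ ≤ ‖p‖ + t := by
      calc ‖zz‖ = ‖p + (zz - p)‖ := by ring_nf
        _ ≤ ‖p‖ + ‖zz - p‖ := norm_add_le _ _
        _ ≤ ‖p‖ + t := by linarith
    have hmem : zz ∈ closedBall (0:ℂ) R := by
      simp only [mem_closedBall, dist_zero_right]
      linarith
    have hkey : (R - ‖zz‖) * ‖deriv f zz‖ ≤ (R - ‖p‖) * M := hpmax hmem
    have htzz : t ≤ R - ‖zz‖ := by simp [ht] at *; linarith
    nlinarith [norm_nonneg (deriv f zz)]
  -- Schwarz for q = deriv f - deriv f p on ball p t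
  have schwarz : ∀ zz ∈ ball p t, ‖deriv f zz - deriv f p‖ ≤ 4 * M / t * ‖zz - p‖ := by
    intro zz hzz
    have hq : DifferentiableOn ℂ (fun zz => deriv f zz - deriv f p) (ball p t) :=
      ((picard_deriv_diff hf).sub_const _).differentiableOn
    have maps : MapsTo (fun zz => deriv f zz - deriv f p) (ball p t)
        (closedBall (deriv f p - deriv f p) (4 * M)) := by
      intro x hx
      simp only [mem_closedBall, sub_self, dist_zero_right]
      calc ‖deriv f x - deriv f p‖ ≤ ‖deriv f x‖ + ‖deriv f p‖ := norm_sub_le _ _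
        _ ≤ 2 * M + M := by have := step1 x hx; linarith
        _ ≤ 4 * M := by linarith
    have := Complex.dist_le_div_mul_dist_of_mapsTo_ball hq maps hzz
    simpa [dist_eq_norm] using this
  set r := t / 8 with hrdef
  have hrpos : 0 < r := by positivity
  set rho := M * r / 2 with hrhodef
  have hrhopos : 0 < rho := by positivity
  -- mean value estimate
  have lower : ∀ z ∈ sphere p r, rho ≤ ‖f z - f p‖ := by
    intro z hz
    have hzr : ‖z - p‖ = r := by simpa [dist_eq_norm] using hz
    have hsub : closedBall p r ⊆ ball p t := by
      apply closedBall_subset_ball; simp [hrdef]; linarith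
    have hmvt : ‖(f z - deriv f p * z) - (f p - deriv f p * p)‖ ≤ M / 2 * ‖z - p‖ := by
      apply Convex.norm_image_sub_le_of_norm_hasDerivWithin_le
        (f' := fun zz => deriv f zz - deriv f p)
        (fun x hx => (((hf x).hasDerivAt).sub
          ((hasDerivAt_id x).const_mul (deriv f p))).hasDerivWithinAt.congr_deriv (by ring))
        (fun x hx => ?_) (convex_closedBall p r) (mem_closedBall_self hrpos.le)
        (by simpa [dist_eq_norm] using hz.le)
      · have hx' : x ∈ ball p t := hsub hx
        have hxr : ‖x - p‖ ≤ r := by simpa [dist_eq_norm] using hx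
        calc ‖deriv f x - deriv f p‖ ≤ 4 * M / t * ‖x - p‖ := schwarz x hx'
          _ ≤ 4 * M / t * r := by gcongr
          _ = M / 2 := by field_simp [hrdef]; ring
    have h1 : ‖deriv f p * (z - p)‖ = M * r := by
      rw [norm_mul, hzr]
    have h2 : f z - f p = (deriv f p * (z - p)) + ((f z - deriv f p * z) - (f p - deriv f p * p)) := by
      ring
    calc rho = M * r - M / 2 * r := by rw [hrhodef]; ring
      _ ≤ ‖deriv f p * (z - p)‖ - ‖(f z - deriv f p * z) - (f p - deriv f p * p)‖ := by
          rw [h1]; rw [hzr] at hmvt; linarith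
      _ ≤ ‖f z - f p‖ := by
          rw [h2]
          have := norm_sub_norm_le (deriv f p * (z - p))
            (-((f z - deriv f p * z) - (f p - deriv f p * p)))
          simp only [norm_neg] at this
          calc _ ≤ ‖deriv f p * (z - p) - -((f z - deriv f p * z) - (f p - deriv f p * p))‖ := this
            _ = _ := by ring_nf
  -- conclusion
  refine ⟨f p, fun w hw => ?_⟩
  by_contra hwr
  have hne : ∀ z, f z - w ≠ 0 := by
    intro z hzz
    exact hwr ⟨z, sub_eq_zero.1 hzz⟩
  set s := dist w (f p) with hs
  have hs0 : 0 < s := dist_pos.2 (fun h => hwr ⟨p, h.symm⟩)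
  have hsrho : s < rho / 2 := by
    have h64 : R * ‖deriv f 0‖ / 64 ≤ rho / 2 := by
      have : M * (R - ‖p‖) = ph p := by rw [hph, hM]; ring
      rw [hrhodef, hrdef, ht]
      nlinarith [hp0]
    have := mem_ball.1 hw
    rw [← hs] at this
    linarith
  have hrhos : 0 < rho - s := by linarith
  set G : ℂ → ℂ := fun z => (f z - w)⁻¹ with hG
  have hGd : Differentiable ℂ G := ((hf.sub_const w).inv hne)
  have hGp : ‖G p‖ ≤ (rho - s)⁻¹ := by
    apply Complex.norm_le_of_forall_mem_frontier_norm_le isBounded_ball hGd.diffContOnCl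
    · intro z hz
      rw [frontier_ball p hrpos.ne'] at hz
      have h1 : rho - s ≤ ‖f z - w‖ := by
        have hlow := lower z hz
        have h2 : ‖f z - f p‖ ≤ ‖f z - w‖ + ‖f p - w‖ := by
          calc ‖f z - f p‖ = ‖(f z - w) - (f p - w)‖ := by ring_nf
            _ ≤ ‖f z - w‖ + ‖f p - w‖ := norm_sub_le _ _
        have h3 : ‖f p - w‖ = s := by rw [hs, dist_comm, dist_eq_norm]
        linarith
      rw [hG]
      simp only [norm_inv]
      exact inv_anti₀ hrhos h1
    · exact subset_closure (mem_ball_self hrpos)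
  have hGpval : ‖G p‖ = s⁻¹ := by
    rw [hG]
    simp only [norm_inv]
    rw [hs, dist_comm, dist_eq_norm]
  rw [hGpval] at hGp
  have : rho - s ≤ s := by
    have := (inv_le_inv₀ hs0 hrhos).1 hGp
    linarith [this]
  linarith


noncomputable def picardX (m : ℕ) : ℝ :=
  Real.log ((2 * m + 1) + Real.sqrt ((2 * m + 1) ^ 2 - 1)) / 2

lemma picardU_pos (m : ℕ) : (0:ℝ) < (2 * m + 1) + Real.sqrt ((2 * m + 1) ^ 2 - 1) := by
  have := Real.sqrt_nonneg (((2:ℝ) * m + 1) ^ 2 - 1)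
  positivity

lemma picardU_ge (m : ℕ) : (2 * m + 1 : ℝ) ≤ (2 * m + 1) + Real.sqrt ((2 * m + 1) ^ 2 - 1) := by
  have := Real.sqrt_nonneg (((2:ℝ) * m + 1) ^ 2 - 1)
  linarith

lemma picardX_nonneg (m : ℕ) : 0 ≤ picardX m := by
  have h1 : (1:ℝ) ≤ (2 * m + 1) + Real.sqrt ((2 * m + 1) ^ 2 - 1) := by
    have := picardU_ge m
    have h2 : (1:ℝ) ≤ 2 * m + 1 := by
      have := Nat.cast_nonneg (α := ℝ) m; linarith
    linarith
  have := Real.log_nonneg h1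
  unfold picardX
  linarith

lemma picardX_zero : picardX 0 = 0 := by
  unfold picardX
  norm_num

lemma picardX_gap (m : ℕ) : picardX (m + 1) ≤ picardX m + 1 := by
  unfold picardX
  set y1 : ℝ := 2 * m + 1 with hy1
  set y2 : ℝ := 2 * (m + 1 : ℕ) + 1 with hy2
  have hy2' : y2 = 2 * m + 3 := by rw [hy2]; push_cast; ring
  set u1 : ℝ := y1 + Real.sqrt (y1 ^ 2 - 1) with hu1
  set u2 : ℝ := y2 + Real.sqrt (y2 ^ 2 - 1) with hu2
  have hu1pos : 0 < u1 := picardU_pos m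
  have hu2pos : 0 < u2 := picardU_pos (m + 1)
  have hu1ge : y1 ≤ u1 := picardU_ge m
  have hsq : Real.sqrt (y2 ^ 2 - 1) ≤ y2 := by
    have h1 : (0:ℝ) ≤ y2 := by rw [hy2']; positivity
    calc Real.sqrt (y2 ^ 2 - 1) ≤ Real.sqrt (y2 ^ 2) := by
          apply Real.sqrt_le_sqrt; linarith
      _ = y2 := by rw [Real.sqrt_sq h1]
  have hu2le : u2 ≤ 6 * u1 := by
    have h1 : (1:ℝ) ≤ y1 := by
      rw [hy1]; have := Nat.cast_nonneg (α := ℝ) m; linarith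
    have : u2 ≤ 2 * y2 := by linarith
    have h3 : 2 * y2 ≤ 6 * y1 := by rw [hy1, hy2']; push_cast; linarith
    linarith
  have hlog : Real.log u2 ≤ Real.log 6 + Real.log u1 := by
    rw [← Real.log_mul (by norm_num) hu1pos.ne']
    exact Real.log_le_log hu2pos hu2le
  have hlog6 : Real.log 6 < 2 := by
    have h := Real.exp_one_gt_d9
    have h2 : Real.exp 2 = Real.exp 1 * Real.exp 1 := by
      rw [← Real.exp_add]; norm_num
    have h3 : (6:ℝ) < Real.exp 2 := by nlinarith
    calc Real.log 6 < Real.log (Real.exp 2) := Real.log_lt_log (by norm_num) h3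
      _ = 2 := Real.log_exp 2
  linarith

lemma picardX_unbounded (T : ℝ) : ∃ m : ℕ, T < picardX m := by
  refine ⟨⌈Real.exp (2 * T)⌉₊, ?_⟩
  set m := ⌈Real.exp (2 * T)⌉₊ with hm
  have h1 : Real.exp (2 * T) ≤ m := Nat.le_ceil _
  have h2 : Real.exp (2 * T) < 2 * m + 1 := by
    have : (0:ℝ) ≤ m := Nat.cast_nonneg m
    linarith
  have h3 : Real.exp (2 * T) < (2 * m + 1) + Real.sqrt ((2 * m + 1) ^ 2 - 1) := by
    have := picardU_ge m
    linarith
  have h4 : 2 * T < Real.log ((2 * m + 1) + Real.sqrt ((2 * m + 1) ^ 2 - 1)) := by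
    rw [← Real.log_exp (2 * T)]
    exact Real.log_lt_log (Real.exp_pos _) h3
  unfold picardX
  linarith

lemma picardX_cover (s : ℝ) (hs : 0 ≤ s) : ∃ m : ℕ, |s - picardX m| ≤ 1 := by
  have hex : ∃ m : ℕ, s < picardX m := picardX_unbounded s
  have hm0spec : s < picardX (Nat.find hex) := Nat.find_spec hex
  have hm0ne : Nat.find hex ≠ 0 := by
    intro h
    rw [h, picardX_zero] at hm0spec
    linarith
  obtain ⟨m, hmeq⟩ := Nat.exists_eq_succ_of_ne_zero hm0ne
  have hle : picardX m ≤ s := by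
    by_contra hlt
    push_neg at hlt
    have := Nat.find_min' hex hlt
    omega
  rw [hmeq] at hm0spec
  refine ⟨m, ?_⟩
  have := picardX_gap m
  rw [abs_le]
  have hlt : s < picardX (m + 1) := hm0spec
  constructor <;> linarith

lemma picard_cosh_sq (m : ℕ) : Real.cosh (picardX m) ^ 2 = m + 1 := by
  set y : ℝ := 2 * m + 1 with hy
  have hy1 : (1:ℝ) ≤ y := by
    rw [hy]; have := Nat.cast_nonneg (α := ℝ) m; linarith
  set sq : ℝ := Real.sqrt (y ^ 2 - 1) with hsq
  have hs2 : sq ^ 2 = y ^ 2 - 1 := Real.sq_sqrt (by nlinarith)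
  set u : ℝ := y + sq with hu
  have hupos : (0:ℝ) < u := picardU_pos m
  have huinv : u⁻¹ = y - sq := by
    have hmul : u * (y - sq) = 1 := by
      have : u * (y - sq) = y ^ 2 - sq ^ 2 := by rw [hu]; ring
      rw [this, hs2]; ring
    field_simp at hmul ⊢
    linarith [hmul]
  have hcosh_log : Real.cosh (Real.log u) = (u + u⁻¹) / 2 := Real.cosh_log hupos
  have h2x : 2 * picardX m = Real.log u := by
    unfold picardX
    rw [← hy, ← hsq, ← hu]
    ring
  have hc2 : Real.cosh (2 * picardX m) = y := by
    rw [h2x, hcosh_log, huinv]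
    ring
  have hctm := Real.cosh_two_mul (picardX m)
  rw [hc2] at hctm
  rw [hy] at hctm
  have h5 := Real.cosh_sq (picardX m)
  linarith

lemma picard_grid (w : ℂ) :
    ∃ e : ℂ, dist e w < 3 ∧ ∃ n : ℕ, Complex.cosh e ^ 2 = (n : ℂ) + 1 := by
  obtain ⟨m, hm⟩ := picardX_cover |w.re| (abs_nonneg _)
  set k : ℤ := round (w.im / Real.pi) with hk
  have hpi : (0:ℝ) < Real.pi := Real.pi_pos
  have hkdist : |w.im - k * Real.pi| ≤ Real.pi / 2 := by
    have h1 : |w.im / Real.pi - k| ≤ 1 / 2 := abs_sub_round (w.im / Real.pi)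
    have h2 : |w.im - k * Real.pi| = |w.im / Real.pi - k| * Real.pi := by
      have h3 : (w.im / Real.pi - k) * Real.pi = w.im - k * Real.pi := by
        rw [sub_mul, div_mul_cancel₀ _ hpi.ne']
      rw [← h3, abs_mul, _root_.abs_of_pos hpi]
    rw [h2]
    calc |w.im / Real.pi - k| * Real.pi ≤ 1 / 2 * Real.pi := by
          apply mul_le_mul_of_nonneg_right h1 hpi.le
      _ = Real.pi / 2 := by ring
  set sg : ℝ := if 0 ≤ w.re then 1 else -1 with hsg
  set e : ℂ := (sg * picardX m : ℝ) + (k * Real.pi : ℝ) * I with he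
  have hre : |sg * picardX m - w.re| ≤ 1 := by
    rcases le_or_gt 0 w.re with h | h
    · rw [hsg, if_pos h]
      rw [_root_.abs_of_nonneg h] at hm
      rw [one_mul, abs_sub_comm]
      exact hm
    · rw [hsg, if_neg (not_le.2 h)]
      rw [abs_of_neg h] at hm
      have heq : (-1) * picardX m - w.re = -(picardX m + w.re) := by ring
      have heq2 : -w.re - picardX m = -(picardX m + w.re) := by ring
      rw [heq2, abs_neg] at hm
      rw [heq, abs_neg]
      exact hm
  refine ⟨e, ?_, m, ?_⟩
  · have h1 : dist e w = ‖e - w‖ := dist_eq_norm e w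
    have hre' : (e - w).re = sg * picardX m - w.re := by
      simp [he]
    have him' : (e - w).im = k * Real.pi - w.im := by
      simp [he]
    have h2 : ‖e - w‖ ≤ |(e - w).re| + |(e - w).im| :=
      Complex.norm_le_abs_re_add_abs_im _
    rw [hre', him'] at h2
    have hpilt : Real.pi < 3.15 := Real.pi_lt_d2
    have him2 : |k * Real.pi - w.im| ≤ Real.pi / 2 := by
      rw [abs_sub_comm]; exact hkdist
    rw [h1]
    calc ‖e - w‖ ≤ |sg * picardX m - w.re| + |k * Real.pi - w.im| := h2
      _ ≤ 1 + Real.pi / 2 := by linarith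
      _ < 3 := by linarith
  · have hcoshI : Complex.cosh ((k * Real.pi : ℝ) * I) = Complex.cos (k * Real.pi : ℝ) :=
      Complex.cosh_mul_I _
    have hsinhI : Complex.sinh ((k * Real.pi : ℝ) * I) = Complex.sin (k * Real.pi : ℝ) * I :=
      Complex.sinh_mul_I _
    have hsin0 : Complex.sin ((k * Real.pi : ℝ) : ℂ) = 0 := by
      push_cast
      exact Complex.sin_int_mul_pi k
    have hcos1 : Complex.cos ((k * Real.pi : ℝ) : ℂ) ^ 2 = 1 := by
      have := Complex.sin_sq_add_cos_sq ((k * Real.pi : ℝ) : ℂ)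
      rw [hsin0] at this
      simpa using this
    have hexpand : Complex.cosh e =
        Complex.cosh (sg * picardX m : ℝ) * Complex.cos ((k * Real.pi : ℝ) : ℂ) := by
      rw [he, Complex.cosh_add, hcoshI, hsinhI, hsin0]
      ring
    have hcsg : Complex.cosh ((sg * picardX m : ℝ) : ℂ) ^ 2
        = Complex.cosh ((picardX m : ℝ) : ℂ) ^ 2 := by
      rcases le_or_gt 0 w.re with h | h
      · rw [hsg]; simp [if_pos h]
      · rw [hsg]; simp only [if_neg (not_le.2 h)]
        push_cast
        rw [neg_one_mul, Complex.cosh_neg]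
    rw [hexpand, mul_pow, hcsg, hcos1, mul_one]
    rw [← Complex.ofReal_cosh]
    rw [← Complex.ofReal_pow]
    rw [picard_cosh_sq m]
    push_cast
    ring





/-- **Picard's little theorem.** Every entire function omitting the values `0` and `1`
is constant. (The case `n = 1`, `M = ℙ¹(ℂ)` of Theorem 1, with the three divisors
`{0}, {1}, {∞}`: any two of these three points are disjoint.) -/
theorem picard_little (f : ℂ → ℂ) (hf : Differentiable ℂ f)
    (h0 : ∀ z, f z ≠ 0) (h1 : ∀ z, f z ≠ 1) :
    ∃ c : ℂ, ∀ z, f z = c := by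
  obtain ⟨F, hFdiff, hFexp⟩ := picard_exists_log f hf h0
  have h2pi : (2 * (Real.pi : ℂ) * I) ≠ 0 := by
    simp [Real.pi_ne_zero, I_ne_zero]
  set a : ℂ → ℂ := fun z => F z / (2 * (Real.pi : ℂ) * I) with ha
  have ha_diff : Differentiable ℂ a := hFdiff.div_const _
  have hFa : ∀ z, F z = a z * (2 * (Real.pi : ℂ) * I) := by
    intro z
    rw [ha]
    field_simp
  have hInt : ∀ z, ∀ n : ℕ, a z ≠ (n : ℂ) := by
    intro z n hn
    apply h1 z
    rw [← hFexp z, hFa z, hn]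
    exact_mod_cast Complex.exp_int_mul_two_pi_mul_I (n : ℤ)
  have ha0 : ∀ z, a z ≠ 0 := fun z => by simpa using hInt z 0
  have ha1 : ∀ z, a z - 1 ≠ 0 := fun z =>
    sub_ne_zero.2 (by simpa using hInt z 1)
  obtain ⟨La, hLa_diff, hLa⟩ := picard_exists_log a ha_diff ha0
  obtain ⟨Lb, hLb_diff, hLb⟩ := picard_exists_log (fun z => a z - 1)
    (ha_diff.sub_const 1) ha1
  set sa : ℂ → ℂ := fun z => exp (La z / 2) with hsa
  set sb : ℂ → ℂ := fun z => exp (Lb z / 2) with hsb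
  have hsa2 : ∀ z, sa z ^ 2 = a z := by
    intro z
    rw [hsa]
    rw [sq, ← Complex.exp_add]
    rw [← hLa z]
    norm_num
  have hsb2 : ∀ z, sb z ^ 2 = a z - 1 := by
    intro z
    rw [hsb]
    rw [sq, ← Complex.exp_add]
    rw [← hLb z]
    norm_num
  set b : ℂ → ℂ := fun z => sa z - sb z with hb
  have hbne : ∀ z, b z ≠ 0 := by
    intro z hz
    have h : sa z = sb z := by rwa [hb, sub_eq_zero] at hz
    have := hsa2 z
    rw [h, hsb2 z] at this
    simp at this
  have hbinv : ∀ z, (b z)⁻¹ = sa z + sb z := by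
    intro z
    have hmul : b z * (sa z + sb z) = 1 := by
      have : b z * (sa z + sb z) = sa z ^ 2 - sb z ^ 2 := by rw [hb]; ring
      rw [this, hsa2 z, hsb2 z]; ring
    exact inv_eq_of_mul_eq_one_right hmul
  have hb_diff : Differentiable ℂ b :=
    ((hLa_diff.div_const 2).cexp).sub ((hLb_diff.div_const 2).cexp)
  obtain ⟨c, hc_diff, hc⟩ := picard_exists_log b hb_diff hbne
  have hcosh : ∀ z, Complex.cosh (c z) ^ 2 = a z := by
    intro z
    have h1 : Complex.cosh (c z) = (exp (c z) + exp (-(c z))) / 2 := rfl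
    rw [h1, Complex.exp_neg, hc z, hbinv z]
    have : (b z + (sa z + sb z)) / 2 = sa z := by rw [hb]; ring
    rw [this, hsa2 z]
  -- derivative of c vanishes everywhere
  have hderiv : ∀ z₀, deriv c z₀ = 0 := by
    intro z₀
    by_contra hd
    set g : ℂ → ℂ := fun z => c (z₀ + z) with hg
    have hg_diff : Differentiable ℂ g :=
      hc_diff.comp (differentiable_id.const_add z₀)
    have hgd : deriv g 0 = deriv c z₀ := by
      have h1 : HasDerivAt (fun z : ℂ => z₀ + z) 1 0 :=
        (hasDerivAt_id 0).const_add z₀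
      have h2 : HasDerivAt c (deriv c z₀) (z₀ + 0) := by
        simpa using (hc_diff (z₀ + 0)).hasDerivAt
      have h3 := h2.comp 0 h1
      simpa [hg, Function.comp_def] using h3.deriv
    have hgd0 : deriv g 0 ≠ 0 := by rw [hgd]; exact hd
    have hnorm : ‖deriv g 0‖ ≠ 0 := norm_ne_zero_iff.2 hgd0
    set R : ℝ := 300 / ‖deriv g 0‖ with hR
    have hRpos : 0 < R := by
      apply div_pos (by norm_num)
      exact lt_of_le_of_ne (norm_nonneg _) (Ne.symm hnorm)
    obtain ⟨w, hw⟩ := picard_bloch g hg_diff hgd0 R hRpos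
    have hrad : R * ‖deriv g 0‖ / 64 = 300 / 64 := by
      rw [hR, div_mul_cancel₀ _ hnorm]
    obtain ⟨e, hew, n, hen⟩ := picard_grid w
    have hmem : e ∈ ball w (R * ‖deriv g 0‖ / 64) := by
      rw [mem_ball, hrad]
      calc dist e w < 3 := hew
        _ < 300 / 64 := by norm_num
    obtain ⟨z, hz⟩ := hw hmem
    have : a (z₀ + z) = (n : ℂ) + 1 := by
      rw [← hcosh (z₀ + z)]
      rw [show c (z₀ + z) = e from hz ▸ rfl]
      exact hen
    have hne := hInt (z₀ + z) (n + 1)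
    rw [this] at hne
    apply hne
    push_cast
    ring
  have hcconst : ∀ z, c z = c 0 :=
    fun z => is_const_of_deriv_eq_zero hc_diff hderiv z 0
  refine ⟨f 0, fun z => ?_⟩
  have haz : a z = a 0 := by
    rw [← hcosh z, ← hcosh 0, hcconst z]
  rw [← hFexp z, ← hFexp 0, hFa z, hFa 0, haz]

end PicardAux2
end
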